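/- arXiv:2605.14451 — 2 statements merged into one kernel-verified Lean document; each statement's English description precedes it below -/
import Mathlib

section
/- Let B ∈ ℝ^{N×N} be doubly stochastic with columns b_1,...,b_N. Then I_N − B^T B = ∑_{n<m} (b_n^T b_m)(e_n − e_m)(e_n − e_m)^T, where e_n is the n-th standard basis vector. In particular, the diagonal entry [I_N − B^T B]_{n,n} equals ∑_{m≠n} b_n^T b_m, and the off-diagonal entry [I_N − B^T B]_{n,m} equals −b_n^T b_m for n ≠ m. -/
/-!
Row and column sums equal to one give the Gram matrix `G = BᵀB` row sums equal to one, so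
`I - G = diag(G 𝟙) - G` is the Laplacian of the symmetric weight matrix `G`. For symmetric
weights `W`, the rank-one term `W n m • (e n - e m)(e n - e m)ᵀ` of a pair `n < m` is
`W n m • (E n n - E n m) + W m n • (E m m - E m n)`, so summing over `n < m` gives
`∑ n, ∑ m, W n m • (E n n - E n m) = diag(W 𝟙) - W`.
-/

open Finset

theorem Finset.sum_filter_lt_add_swap {ι M : Type*} [Fintype ι] [LinearOrder ι]
    [AddCommMonoid M] (g : ι → ι → M) (hg : ∀ n, g n n = 0) :
    ∑ q ∈ univ.filter (fun q : ι × ι => q.1 < q.2), (g q.1 q.2 + g q.2 q.1) =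
      ∑ n, ∑ m, g n m := by
  have hswap : ∑ q ∈ univ.filter (fun q : ι × ι => q.1 < q.2), g q.2 q.1 =
      ∑ q ∈ univ.filter (fun q : ι × ι => ¬q.1 < q.2), g q.1 q.2 := by
    calc _ = ∑ q ∈ univ.filter (fun q : ι × ι => q.2 < q.1), g q.1 q.2 :=
          sum_nbij' Prod.swap Prod.swap (by simp) (by simp) (by simp) (by simp) (by simp)
      _ = _ := by
          refine sum_subset (fun q hq => by simp_all [le_of_lt]) fun ⟨a, b⟩ hba hab => ?_
          simp only [mem_filter, mem_univ, true_and, not_lt] at hba hab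
          obtain rfl := le_antisymm hab hba
          exact hg a
  rw [sum_add_distrib, hswap, sum_filter_add_sum_filter_not, ← Fintype.sum_prod_type']

namespace Matrix

variable {ι R : Type*} [DecidableEq ι]

def laplacian [Fintype ι] [AddCommGroup R] (W : Matrix ι ι R) : Matrix ι ι R :=
  diagonal (fun n => ∑ m, W n m) - W

section AddCommGroup

variable [Fintype ι] [AddCommGroup R] (W : Matrix ι ι R)

theorem laplacian_apply_self (n : ι) :
    W.laplacian n n = ∑ m ∈ univ.filter (fun m => m ≠ n), W n m := by
  rw [laplacian, sub_apply, diagonal_apply_eq, filter_ne', ← add_sum_erase _ _ (mem_univ n),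
    add_sub_cancel_left]

theorem laplacian_apply_of_ne {n m : ι} (h : n ≠ m) : W.laplacian n m = -W n m := by
  rw [laplacian, sub_apply, diagonal_apply_ne _ h, zero_sub]

theorem laplacian_eq_sum_single :
    W.laplacian = ∑ n, ∑ m, (single n n (W n m) - single n m (W n m)) := by
  have hdiag : ∑ n, ∑ m, single n n (W n m) = diagonal fun n => ∑ m, W n m := by
    rw [← sum_single_eq_diagonal]
    exact sum_congr rfl fun n _ => (map_sum (singleAddMonoidHom n n) (W n) univ).symm
  rw [laplacian, ← hdiag]
  simp only [sum_sub_distrib, ← matrix_eq_sum_single]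

end AddCommGroup

section Ring

variable [Ring R] {W : Matrix ι ι R}

theorem IsSymm.smul_vecMulVec_single_sub_single (hW : W.IsSymm) (n m : ι) :
    W n m • vecMulVec (Pi.single n 1 - Pi.single m 1) (Pi.single n 1 - Pi.single m 1) =
      (single n n (W n m) - single n m (W n m)) + (single m m (W m n) - single m n (W m n)) := by
  simp only [sub_vecMulVec, vecMulVec_sub, ← single_eq_single_vecMulVec_single, smul_sub,
    smul_single, smul_eq_mul, mul_one, hW.apply n m]
  abel

variable [Fintype ι]

theorem IsSymm.laplacian_eq_sum_lt [LinearOrder ι] (hW : W.IsSymm) :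
    W.laplacian = ∑ q ∈ univ.filter (fun q : ι × ι => q.1 < q.2),
      W q.1 q.2 •
        vecMulVec (Pi.single q.1 1 - Pi.single q.2 1) (Pi.single q.1 1 - Pi.single q.2 1) := by
  simp only [hW.smul_vecMulVec_single_sub_single]
  rw [sum_filter_lt_add_swap (fun n m => single n n (W n m) - single n m (W n m)) (by simp),
    laplacian_eq_sum_single]

theorem one_sub_transpose_mul_self_eq_laplacian {κ : Type*} [Fintype κ] (B : Matrix κ ι R)
    (hrow : ∀ k, ∑ n, B k n = 1) (hcol : ∀ n, ∑ k, B k n = 1) :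
    1 - Bᵀ * B = (Bᵀ * B).laplacian := by
  have hgram : ∀ n, ∑ m, (Bᵀ * B) n m = 1 := fun n => by
    simp only [mul_apply, transpose_apply]
    rw [sum_comm]
    simp only [← mul_sum, hrow, mul_one, hcol]
  rw [laplacian, funext hgram, diagonal_one]

end Ring

end Matrix

theorem doubly_stochastic_laplacian_decomposition_general {N : ℕ}
    (B : Matrix (Fin N) (Fin N) ℝ)
    (hrow : ∀ k, ∑ n, B k n = 1)
    (hcol : ∀ n, ∑ k, B k n = 1) :
    (1 - B.transpose * B =
        ∑ q ∈ Finset.univ.filter (fun q : Fin N × Fin N => q.1 < q.2),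
          (∑ i, B i q.1 * B i q.2) •
            Matrix.vecMulVec
              (fun i => (if i = q.1 then (1 : ℝ) else 0) - if i = q.2 then 1 else 0)
              (fun i => (if i = q.1 then (1 : ℝ) else 0) - if i = q.2 then 1 else 0)) ∧
      (∀ n, (1 - B.transpose * B) n n =
        ∑ m ∈ Finset.univ.filter (fun m => m ≠ n), ∑ i, B i n * B i m) ∧
      (∀ n m, n ≠ m → (1 - B.transpose * B) n m = -(∑ i, B i n * B i m)) := by
  rw [Matrix.one_sub_transpose_mul_self_eq_laplacian B hrow hcol]
  refine ⟨?_, fun n => Matrix.laplacian_apply_self _ n,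
    fun n m h => Matrix.laplacian_apply_of_ne _ h⟩
  rw [(Matrix.isSymm_transpose_mul_self B).laplacian_eq_sum_lt]
  simp only [Matrix.mul_apply, Matrix.transpose_apply, ← Pi.single_apply, ← Pi.sub_apply]

/-- Laplacian decomposition for a doubly stochastic matrix `B` with columns `b_n`:
`I − BᵀB = ∑_{n<m} (b_n^T b_m)(e_n − e_m)(e_n − e_m)^T`, with diagonal entries
`∑_{m≠n} b_n^T b_m` and off-diagonal entries `−b_n^T b_m`. -/
theorem doubly_stochastic_laplacian_decomposition {N : ℕ}
    (B : Matrix (Fin N) (Fin N) ℝ)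
    (hpos : ∀ k n, 0 ≤ B k n)
    (hrow : ∀ k, ∑ n, B k n = 1)
    (hcol : ∀ n, ∑ k, B k n = 1) :
    (1 - B.transpose * B =
        ∑ q ∈ Finset.univ.filter (fun q : Fin N × Fin N => q.1 < q.2),
          (∑ i, B i q.1 * B i q.2) •
            Matrix.vecMulVec
              (fun i => (if i = q.1 then (1 : ℝ) else 0) - if i = q.2 then 1 else 0)
              (fun i => (if i = q.1 then (1 : ℝ) else 0) - if i = q.2 then 1 else 0)) ∧
      (∀ n, (1 - B.transpose * B) n n =
        ∑ m ∈ Finset.univ.filter (fun m => m ≠ n), ∑ i, B i n * B i m) ∧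
      (∀ n m, n ≠ m → (1 - B.transpose * B) n m = -(∑ i, B i n * B i m)) :=
  doubly_stochastic_laplacian_decomposition_general B hrow hcol
end

section
/- Let τ_1,...,τ_L be distinct real numbers and β_1,...,β_L nonzero complex numbers, with N ≥ 2L. Define a_ℓ ∈ ℂ^N by (a_ℓ)_n = e^{−j2π(n−1)τ_ℓ/N} and ȧ_ℓ = Diag{−j2π(n−1)/N} a_ℓ. Then the N×3L matrix H = [β_1 ȧ_1,...,β_L ȧ_L, a_1,...,a_L, j a_1,...,j a_L], viewed as a real-linear map on ℝ^{3L}, is injective; equivalently, Hd = 0 for d ∈ ℝ^{3L} implies d = 0. -/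
/-!
With `x_ℓ = exp (-2πiτ_ℓ/N)`, the `n`-th row of `H d = 0` reads
`∑_ℓ (c_ℓ + n e_ℓ) x_ℓ ^ n = 0` with `c_ℓ = d_{a,ℓ} + i d_{b,ℓ}` and
`e_ℓ = -2πi β_ℓ d_{τ,ℓ} / N`, a system with a confluent Vandermonde matrix. Pairing it with
the coefficients of a polynomial `g` of degree `< N` gives
`∑_ℓ (c_ℓ g(x_ℓ) + e_ℓ x_ℓ g'(x_ℓ)) = 0`. For `q = ∏_{k ≠ ℓ} (X - x_k)²`, of degree `2L - 2`,
the choices `g = (X - x_ℓ) q` and `g = q` isolate `e_ℓ` and then `c_ℓ`. The nodes `x_ℓ` are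
distinct precisely because the delays are distinct modulo `N`.
-/

open Polynomial Finset

namespace Polynomial

variable {R : Type*} [CommRing R]

theorem sum_range_coeff_mul_natCast_mul_pow {g : R[X]} {N : ℕ} (hg : g.natDegree < N) (x : R) :
    ∑ n ∈ range N, g.coeff n * n * x ^ n = x * (derivative g).eval x := by
  obtain ⟨M, rfl⟩ : ∃ M, N = M + 1 := Nat.exists_eq_add_one.2 (by omega)
  rw [eval_eq_sum_range' (n := M + 1) ((natDegree_derivative_le g).trans_lt (by omega)), mul_sum,
    sum_range_succ', sum_range_succ]
  simp only [coeff_derivative, coeff_eq_zero_of_natDegree_lt hg, Nat.cast_zero, mul_zero, zero_mul,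
    add_zero]
  exact sum_congr rfl fun n _ => by push_cast; ring

theorem eval_derivative_eq_zero_of_sq_dvd {p : R[X]} {a : R} (h : (X - C a) ^ 2 ∣ p) :
    (derivative p).eval a = 0 :=
  (dvd_iff_isRoot).1 (by simpa using pow_sub_one_dvd_derivative_of_pow_dvd h)

theorem eval_eq_zero_of_sq_dvd {p : R[X]} {a : R} (h : (X - C a) ^ 2 ∣ p) : p.eval a = 0 :=
  (dvd_iff_isRoot).1 ((dvd_pow_self _ two_ne_zero).trans h)

end Polynomial

section ConfluentVandermonde

variable {R ι : Type*} [CommRing R] [Fintype ι]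

theorem sum_coeff_mul_sum_add_mul_pow {g : R[X]} {N : ℕ} (hg : g.natDegree < N)
    (x c e : ι → R) :
    ∑ n ∈ range N, g.coeff n * ∑ l, (c l + n * e l) * x l ^ n =
      ∑ l, (c l * g.eval (x l) + e l * (x l * (derivative g).eval (x l))) := by
  simp only [eval_eq_sum_range' hg, ← sum_range_coeff_mul_natCast_mul_pow hg, mul_sum]
  rw [sum_comm]
  refine sum_congr rfl fun l _ => ?_
  rw [← sum_add_distrib]
  exact sum_congr rfl fun n _ => by ring

theorem exists_sq_dvd_and_eval_ne_zero [IsDomain R] {x : ι → R} (hx : Function.Injective x)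
    (l : ι) : ∃ q : R[X], q.natDegree + 2 ≤ 2 * Fintype.card ι ∧ q.eval (x l) ≠ 0 ∧
      ∀ k ≠ l, (X - C (x k)) ^ 2 ∣ q := by
  classical
  refine ⟨∏ k ∈ univ.erase l, (X - C (x k)) ^ 2, ?_, ?_, fun k hk => ?_⟩
  · have hcard := card_erase_add_one (mem_univ l)
    rw [natDegree_prod _ _ fun k _ => pow_ne_zero 2 (X_sub_C_ne_zero (x k))]
    simp only [natDegree_pow, natDegree_X_sub_C, sum_const, smul_eq_mul, card_univ] at hcard ⊢
    omega
  · rw [eval_prod, prod_ne_zero_iff]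
    intro k hk
    simpa [sub_eq_zero] using hx.ne (ne_of_mem_erase hk).symm
  · exact dvd_prod_of_mem _ (mem_erase.2 ⟨hk, mem_univ k⟩)

theorem eq_zero_of_sum_add_mul_pow_eq_zero [IsDomain R] {N : ℕ} (hN : 2 * Fintype.card ι ≤ N)
    {x : ι → R} (hx : Function.Injective x) (hx0 : ∀ l, x l ≠ 0) {c e : ι → R}
    (h : ∀ n < N, ∑ l, (c l + n * e l) * x l ^ n = 0) : c = 0 ∧ e = 0 := by
  have moment_eq_zero (g : R[X]) (hg : g.natDegree < N) :
      ∑ l, (c l * g.eval (x l) + e l * (x l * (derivative g).eval (x l))) = 0 := by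
    rw [← sum_coeff_mul_sum_add_mul_pow hg]
    exact sum_eq_zero fun n hn => by rw [h n (mem_range.1 hn), mul_zero]
  have single_eq_zero (l : ι) (g : R[X]) (hg : g.natDegree < N)
      (hdvd : ∀ k ≠ l, (X - C (x k)) ^ 2 ∣ g) :
      c l * g.eval (x l) + e l * (x l * (derivative g).eval (x l)) = 0 := by
    rw [← moment_eq_zero g hg, sum_eq_single l (fun k _ hk => ?_) (by simp)]
    simp [eval_eq_zero_of_sq_dvd (hdvd k hk), eval_derivative_eq_zero_of_sq_dvd (hdvd k hk)]
  have hce (l : ι) : c l = 0 ∧ e l = 0 := by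
    obtain ⟨q, hq_deg, hq_ne, hq_dvd⟩ := exists_sq_dvd_and_eval_ne_zero hx l
    -- Against `(X - x l) * q` the `c`-term vanishes and the `e`-term reads `e l * x l * q (x l)`.
    have he : e l = 0 := by
      have hdeg : ((X - C (x l)) * q).natDegree < N :=
        natDegree_mul_le.trans_lt (by linarith [natDegree_X_sub_C_le (x l)])
      simpa [derivative_mul, hx0 l, hq_ne] using
        single_eq_zero l _ hdeg fun k hk => (hq_dvd k hk).mul_left _
    refine ⟨?_, he⟩
    simpa [he, hq_ne] using single_eq_zero l q (by omega) hq_dvd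
  exact ⟨funext fun l => (hce l).1, funext fun l => (hce l).2⟩

end ConfluentVandermonde

open Complex Real in
theorem exists_int_sub_eq_mul_of_exp_eq {N : ℕ} (hN : N ≠ 0) {s t : ℝ}
    (h : exp (-(2 * π * I * s) / N) = exp (-(2 * π * I * t) / N)) :
    ∃ z : ℤ, s - t = N * z := by
  obtain ⟨m, hm⟩ := exp_eq_exp_iff_exists_int.1 h
  field_simp at hm
  refine ⟨-m, ?_⟩
  have : ((s - t : ℝ) : ℂ) = ((N * (-m : ℤ) : ℝ) : ℂ) := by
    push_cast
    linear_combination -hm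
  exact_mod_cast this

/-- Injectivity (full real rank) of the delay-amplitude Jacobian: for distinct delays
`τ_ℓ` (distinct modulo `N`), nonzero amplitudes `β_ℓ`, and `N ≥ 2L`, the matrix
`H = [β_1 ȧ_1, …, β_L ȧ_L, a_1, …, a_L, j a_1, …, j a_L]` with
`(a_ℓ)_n = e^{−j2π(n−1)τ_ℓ/N}` and `ȧ_ℓ = Diag{−j2π(n−1)/N} a_ℓ`, viewed as a
real-linear map on `ℝ^{3L}`, is injective: `H d = 0` implies `d = 0`. -/
theorem delay_jacobian_injective {N L : ℕ} (hNL : 2 * L ≤ N)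
    (τ : Fin L → ℝ) (β : Fin L → ℂ)
    (hτ : ∀ k l, k ≠ l → ¬ ∃ z : ℤ, τ k - τ l = (N : ℝ) * z)
    (hβ : ∀ l, β l ≠ 0)
    (dτ da db : Fin L → ℝ)
    (h : ∀ n : Fin N,
      ∑ l, ((dτ l : ℂ) *
            (β l * (-(2 * Real.pi * Complex.I * ((n : ℕ) : ℂ)) / N) *
              Complex.exp (-(2 * Real.pi * Complex.I * ((n : ℕ) : ℂ) * (τ l : ℂ)) / N))
          + (da l : ℂ) *
              Complex.exp (-(2 * Real.pi * Complex.I * ((n : ℕ) : ℂ) * (τ l : ℂ)) / N)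
          + (db l : ℂ) *
              (Complex.I *
                Complex.exp (-(2 * Real.pi * Complex.I * ((n : ℕ) : ℂ) * (τ l : ℂ)) / N)))
        = 0) :
    dτ = 0 ∧ da = 0 ∧ db = 0 := by
  have hx : Function.Injective fun l => Complex.exp (-(2 * Real.pi * Complex.I * τ l) / N) :=
    fun k l hkl => by_contra fun hne => hτ k l hne <|
      exists_int_sub_eq_mul_of_exp_eq (by have := k.pos; omega) hkl
  obtain ⟨hc, he⟩ := eq_zero_of_sum_add_mul_pow_eq_zero (by simpa using hNL) hx
    (fun _ => Complex.exp_ne_zero _)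
    (c := fun l => da l + db l * Complex.I)
    (e := fun l => dτ l * (β l * (-(2 * Real.pi * Complex.I) / N))) fun n hn => by
      rw [← h ⟨n, hn⟩]
      refine sum_congr rfl fun l _ => ?_
      rw [← Complex.exp_nat_mul]
      ring_nf
  refine ⟨funext fun l => ?_, funext fun l => ?_, funext fun l => ?_⟩
  · have : N ≠ 0 := by have := l.pos; omega
    simpa [hβ l, Real.pi_ne_zero, this] using congrFun he l
  · simpa using congrArg Complex.re (congrFun hc l)
  · simpa using congrArg Complex.im (congrFun hc l)
end
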